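/- Let g : (0,∞) → (0,∞) be decreasing and continuous on (0,R₀) with g(r/2) ≤ c_D·g(r) for 0 < r < R₀, and suppose g(r) → ∞ as r → 0+. Fix m₀, j₀ ∈ ℕ with 2^{m₀} > 2·j₀, β > 0 with (1+β)^{j₀} > c_D, α ∈ (0,1/4), and R ∈ (0,R₀). For each j ∈ ℕ choose r_j > 0 with g(r_j) = c_D^{m₀}·(1+β)^{j-1}·g(α⁴·R). Then Σ_{j=1}^∞ r_j < α⁴·R. -/

import Mathlib

open scoped ENNReal

open Set

/-!
Write `A = α⁴ R`. Iterating the doubling inequality gives `g (A / 2ᵖ) ≤ c_Dᵖ g(A)`, so since `g`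
is nonincreasing, `c_Dᵖ g(A) < g(r)` forces `r < A / 2ᵖ`. Because `(1 + β)^{j₀} > c_D`, the
defining value of `g(r_{n+1})` exceeds `c_D^{m₀ + ⌊n / j₀⌋} g(A)` for `n ≥ 1`, hence
`r_{n+1} < 2^{-m₀} A · 2^{-⌊n/j₀⌋}`; at `n = 0` there is no strict gain, and one halving is given
up to get `r_1 < 2^{1-m₀} A`. Each power of `1/2` is used by
`j₀` consecutive indices, so the series is dominated by `2^{-m₀} A (2 j₀ + 1) ≤ A`.
-/

theorem hasSum_pow_div_of_lt_one {q : ℝ} {k : ℕ} (hk : 0 < k) (hq₀ : 0 ≤ q) (hq₁ : q < 1) :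
    HasSum (fun n : ℕ => q ^ (n / k)) ((1 - q)⁻¹ * k) := by
  have : NeZero k := ⟨hk.ne'⟩
  have hgeom := hasSum_geometric_of_lt_one hq₀ hq₁
  have hblock : HasSum (fun _ : Fin k => (1 : ℝ)) k := by
    simpa using hasSum_fintype (fun _ : Fin k => (1 : ℝ))
  have hprod : HasSum (fun p : ℕ × Fin k => q ^ p.1 * 1) ((1 - q)⁻¹ * k) :=
    hgeom.mul hblock <|
      hgeom.summable.mul_of_nonneg hblock.summable (fun m => by positivity) fun _ => zero_le_one
  simpa [Function.comp_def] using (Nat.divModEquiv k).hasSum_iff.mpr hprod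

theorem pow_div_lt_pow {a b : ℝ} {k n : ℕ} (ha : 0 ≤ a) (hb : 1 < b) (hab : a < b ^ k)
    (hn : n ≠ 0) : a ^ (n / k) < b ^ n := by
  rcases Nat.eq_zero_or_pos (n / k) with h | h
  · rw [h, pow_zero]
    exact one_lt_pow₀ hb hn
  · calc a ^ (n / k) < (b ^ k) ^ (n / k) := pow_lt_pow_left₀ hab ha h.ne'
      _ = b ^ (k * (n / k)) := (pow_mul b k (n / k)).symm
      _ ≤ b ^ n := pow_le_pow_right₀ hb.le (Nat.mul_div_le n k)

theorem exists_hasSum_lt_of_le_of_lt {f b : ℕ → ℝ} {B : ℝ} {i : ℕ} (hf : ∀ n, 0 ≤ f n)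
    (hle : ∀ n, f n ≤ b n) (hlt : f i < b i) (hb : HasSum b B) :
    ∃ S, HasSum f S ∧ S < B :=
  have hsum : Summable f := Summable.of_nonneg_of_le hf hle hb.summable
  ⟨_, hsum.hasSum, hasSum_lt hle hlt hsum.hasSum hb⟩

theorem exists_hasSum_lt_of_le_half_pow_div {f : ℕ → ℝ} {c : ℝ} {k : ℕ}
    (hk : 0 < k) (hf : ∀ n, 0 ≤ f n) (h₀ : f 0 < 2 * c)
    (hle : ∀ n, n ≠ 0 → f n ≤ c * (1 / 2) ^ (n / k)) :
    ∃ S, HasSum f S ∧ S < c * (2 * k + 1) := by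
  have hmajorant : HasSum (fun n => c * (1 / 2) ^ (n / k) + if n = 0 then c else 0)
      (c * (2 * k + 1)) := by
    rw [show c * (2 * k + 1) = c * ((1 - 1 / 2)⁻¹ * k) + c by ring]
    exact ((hasSum_pow_div_of_lt_one hk (by norm_num) (by norm_num)).mul_left c).add
      (hasSum_ite_eq 0 c)
  refine exists_hasSum_lt_of_le_of_lt (i := 0) hf (fun n => ?_) (by simpa [two_mul] using h₀)
    hmajorant
  rcases eq_or_ne n 0 with rfl | hn
  · simpa [two_mul] using h₀.le
  · simpa [hn] using hle n hn

section Doubling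

variable {g : ℝ → ℝ} {R₀ : ℝ≥0∞} {c : ℝ}

theorem apply_div_two_pow_le (hc : 0 ≤ c)
    (hdbl : ∀ s : ℝ, 0 < s → ENNReal.ofReal s < R₀ → g (s / 2) ≤ c * g s)
    {s : ℝ} (hs : 0 < s) (hsR : ENNReal.ofReal s < R₀) (n : ℕ) :
    g (s / 2 ^ n) ≤ c ^ n * g s := by
  induction n with
  | zero => simp
  | succ n ih =>
    have hle : s / 2 ^ n ≤ s := div_le_self hs.le (one_le_pow₀ one_le_two)
    calc g (s / 2 ^ (n + 1)) = g (s / 2 ^ n / 2) := by rw [pow_succ, div_div]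
      _ ≤ c * g (s / 2 ^ n) :=
        hdbl _ (by positivity) ((ENNReal.ofReal_le_ofReal hle).trans_lt hsR)
      _ ≤ c * (c ^ n * g s) := mul_le_mul_of_nonneg_left ih hc
      _ = c ^ (n + 1) * g s := by ring

theorem lt_div_two_pow_of_pow_mul_lt (hdec : AntitoneOn g (Ioi 0)) (hc : 0 ≤ c)
    (hdbl : ∀ s : ℝ, 0 < s → ENNReal.ofReal s < R₀ → g (s / 2) ≤ c * g s)
    {s u : ℝ} (hs : 0 < s) (hsR : ENNReal.ofReal s < R₀) (hu : 0 < u) {p : ℕ}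
    (h : c ^ p * g s < g u) : u < s / 2 ^ p :=
  hdec.reflect_lt (show 0 < s / 2 ^ p by positivity) hu
    ((apply_div_two_pow_le hc hdbl hs hsR p).trans_lt h)

end Doubling

theorem stmt3_general (g : ℝ → ℝ) (R₀ : ℝ≥0∞) (c_D β α R : ℝ) (m₀ j₀ : ℕ) (r : ℕ → ℝ)
    (hcD : 1 < c_D)
    (hg_pos : ∀ s : ℝ, 0 < s → 0 < g s)
    (hg_dec : ∀ s t : ℝ, 0 < s → s ≤ t → g t ≤ g s)
    (hdbl : ∀ s : ℝ, 0 < s → ENNReal.ofReal s < R₀ → g (s/2) ≤ c_D * g s)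
    (hj₀ : 0 < j₀) (hm₀ : 2 * j₀ < 2 ^ m₀)
    (hβ : 0 < β) (hβj : c_D < (1 + β) ^ j₀)
    (hα : α ∈ Set.Ioo (0:ℝ) (1/4)) (hR : 0 < R) (hRR₀ : ENNReal.ofReal R < R₀)
    (hr : ∀ j : ℕ, 1 ≤ j → 0 < r j ∧ g (r j) = c_D ^ m₀ * (1 + β) ^ (j - 1) * g (α ^ 4 * R)) :
    ∃ S : ℝ, HasSum (fun j : ℕ => r (j + 1)) S ∧ S < α ^ 4 * R := by
  obtain ⟨hα₀, hα₁⟩ := hα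
  set A := α ^ 4 * R
  have hA : 0 < A := by positivity
  have hAR : A ≤ R := mul_le_of_le_one_left hR.le (pow_le_one₀ hα₀.le (by linarith))
  have hAR₀ : ENNReal.ofReal A < R₀ := (ENNReal.ofReal_le_ofReal hAR).trans_lt hRR₀
  have hradius : ∀ n p : ℕ, c_D ^ p < c_D ^ m₀ * (1 + β) ^ n → r (n + 1) < A / 2 ^ p := by
    intro n p h
    obtain ⟨hpos, hval⟩ := hr (n + 1) (Nat.le_add_left 1 n)
    refine lt_div_two_pow_of_pow_mul_lt (fun s hs t _ hst => hg_dec s t hs hst) (by linarith)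
      hdbl hA hAR₀ hpos ?_
    rw [hval, Nat.add_sub_cancel]
    exact mul_lt_mul_of_pos_right h (hg_pos A hA)
  set c := A / 2 ^ m₀ with hc
  have hm₀pos : m₀ ≠ 0 := by rintro rfl; omega
  have hfirst : r 1 < 2 * c := by
    have h := hradius 0 (m₀ - 1) <| by
      simpa using pow_lt_pow_right₀ hcD (Nat.sub_lt (Nat.pos_of_ne_zero hm₀pos) one_pos)
    rwa [show A / 2 ^ (m₀ - 1) = 2 * c by
      rw [hc, ← pow_sub_one_mul hm₀pos (2 : ℝ)]; field_simp] at h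
  have hrest : ∀ n, n ≠ 0 → r (n + 1) < c * (1 / 2) ^ (n / j₀) := by
    intro n hn
    have h := hradius n (m₀ + n / j₀) <| by
      rw [pow_add]
      exact mul_lt_mul_of_pos_left (pow_div_lt_pow (by linarith) (by linarith) hβj hn)
        (by positivity)
    rwa [pow_add, ← div_div, div_eq_mul_one_div _ (2 ^ _), ← one_div_pow] at h
  obtain ⟨S, hS, hSlt⟩ := exists_hasSum_lt_of_le_half_pow_div hj₀
    (fun n => (hr (n + 1) (Nat.le_add_left 1 n)).1.le) hfirst fun n hn => (hrest n hn).le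
  refine ⟨S, hS, hSlt.trans_le ?_⟩
  calc c * (2 * j₀ + 1) ≤ c * 2 ^ m₀ := by gcongr; exact_mod_cast hm₀
    _ = A := div_mul_cancel₀ A (by positivity)

/-- Lemma 5.3 of the paper: with `g` decreasing, continuous on `(0,R₀)`, doubling with
constant `c_D`, blowing up at `0`, and `r_j` defined by
`g(r_j) = c_D^{m₀} (1+β)^{j-1} g(α⁴ R)`, where `2^{m₀} > 2 j₀` and `(1+β)^{j₀} > c_D`,
the sum of all `r_j`, `j ≥ 1`, is less than `α⁴ R`. -/
theorem stmt3 (g : ℝ → ℝ) (R₀ : ℝ≥0∞) (c_D β α R : ℝ) (m₀ j₀ : ℕ) (r : ℕ → ℝ)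
    (hcD : 1 < c_D)
    (hg_pos : ∀ s : ℝ, 0 < s → 0 < g s)
    (hg_dec : ∀ s t : ℝ, 0 < s → s ≤ t → g t ≤ g s)
    (hg_cont : ContinuousOn g {s : ℝ | 0 < s ∧ ENNReal.ofReal s < R₀})
    (hdbl : ∀ s : ℝ, 0 < s → ENNReal.ofReal s < R₀ → g (s/2) ≤ c_D * g s)
    (hlim : Filter.Tendsto g (nhdsWithin 0 (Set.Ioi 0)) Filter.atTop)
    (hj₀ : 0 < j₀) (hm₀ : 2 * j₀ < 2 ^ m₀)
    (hβ : 0 < β) (hβj : c_D < (1 + β) ^ j₀)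
    (hα : α ∈ Set.Ioo (0:ℝ) (1/4)) (hR : 0 < R) (hRR₀ : ENNReal.ofReal R < R₀)
    (hr : ∀ j : ℕ, 1 ≤ j → 0 < r j ∧ g (r j) = c_D ^ m₀ * (1 + β) ^ (j - 1) * g (α ^ 4 * R)) :
    ∃ S : ℝ, HasSum (fun j : ℕ => r (j + 1)) S ∧ S < α ^ 4 * R :=
  stmt3_general g R₀ c_D β α R m₀ j₀ r hcD hg_pos hg_dec hdbl hj₀ hm₀ hβ hβj hα hR hRR₀ hr
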